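/- (Lemma 1: asymptotic orthogonality of user channels with distinct angles of arrival.) Let P ≥ 1. Let f_1, …, f_P ∈ ℝ and g_1, …, g_P ∈ ℝ be such that: (i) f_i − f_j ∉ ℤ and g_i − g_j ∉ ℤ for all i ≠ j; (ii) f_i − g_j ∉ ℤ for all i, j. Let α_1, …, α_P ∈ ℂ and β_1, …, β_P ∈ ℂ, each not identically zero. For each M ≥ 1 define the instantaneous channel vectors h_M = Σ_{p=1}^{P} α_p · a_M(f_p) and h'_M = Σ_{p=1}^{P} β_p · a_M(g_p) in ℂ^M. Then the correlation coefficient γ_M = ⟨h_M, h'_M⟩ / (‖h_M‖ · ‖h'_M‖) tends to 0 as M → ∞. -/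

import Mathlib

/-!
The inner product `⟨a_M(f), a_M(g)⟩` is the geometric sum `∑_{m<M} z^m` with
`z = e^{-2πi(g-f)}`, which stays bounded by `2 / |z - 1|` as soon as `g - f ∉ ℤ`, while
`‖a_M(f)‖² = M`. Expanding the channels, `⟨h_M, h'_M⟩` is therefore bounded in `M`, whereas
`‖h_M‖² ≥ M ∑ |α_p|² - O(1)` and `‖h'_M‖² ≥ M ∑ |β_p|² - O(1)` grow linearly.
-/

open scoped Real

/-- The steering vector `a_M(f) ∈ ℂ^M`, whose `m`-th entry is `e^{-2πi m f}`. -/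
noncomputable def steer (M : ℕ) (f : ℝ) : EuclideanSpace ℂ (Fin M) :=
  WithLp.toLp 2 (fun m => Complex.exp (-(2 * (π : ℂ) * Complex.I * ((m : ℕ) : ℂ) * (f : ℂ))))

open Filter Finset

lemma norm_geom_sum_le_of_norm_le_one {K : Type*} [NormedDivisionRing K] {z : K}
    (hz : ‖z‖ ≤ 1) (hz1 : z ≠ 1) (M : ℕ) :
    ‖∑ m ∈ range M, z ^ m‖ ≤ 2 / ‖z - 1‖ := by
  rw [geom_sum_eq hz1, norm_div]
  gcongr
  calc ‖z ^ M - 1‖ ≤ ‖z ^ M‖ + ‖(1 : K)‖ := norm_sub_le _ _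
    _ ≤ 1 + 1 := by
        gcongr
        · rw [norm_pow]; exact pow_le_one₀ (norm_nonneg _) hz
        · rw [norm_one]
    _ = 2 := by norm_num

-- The `m`-th entry of `steer M f` is `phase f ^ m`.
noncomputable def phase (x : ℝ) : ℂ := Complex.exp (-(2 * π * Complex.I * x))

lemma norm_phase (x : ℝ) : ‖phase x‖ = 1 := by
  rw [phase, Complex.norm_exp]
  simp

lemma phase_ne_one {x : ℝ} (hx : ∀ k : ℤ, x ≠ k) : phase x ≠ 1 := by
  rw [phase, Ne, Complex.exp_eq_one_iff]
  rintro ⟨n, hn⟩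
  apply hx (-n)
  have h2π : 2 * π * Complex.I ≠ 0 := by simp [Real.pi_ne_zero]
  have : (x : ℂ) = ((-n : ℤ) : ℂ) := by
    push_cast
    exact mul_right_cancel₀ h2π (by linear_combination -hn)
  exact_mod_cast this

lemma inner_steer_steer (M : ℕ) (f g : ℝ) :
    inner ℂ (steer M f) (steer M g) = ∑ m ∈ range M, phase (g - f) ^ m := by
  rw [PiLp.inner_apply, ← Fin.sum_univ_eq_sum_range]
  refine Fintype.sum_congr _ _ fun m => ?_
  simp only [steer, phase, PiLp.toLp_apply, RCLike.inner_apply', ← Complex.exp_conj,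
    ← Complex.exp_add, ← Complex.exp_nat_mul, map_neg, map_mul, Complex.conj_I,
    Complex.conj_ofReal, map_ofNat, Complex.conj_natCast]
  congr 1
  push_cast
  ring

lemma norm_steer_sq (M : ℕ) (f : ℝ) : ‖steer M f‖ ^ 2 = M := by
  rw [norm_sq_eq_re_inner (𝕜 := ℂ), inner_steer_steer]
  simp [phase]

lemma norm_inner_steer_le {f g : ℝ} (hfg : ∀ k : ℤ, f - g ≠ k) (M : ℕ) :
    ‖inner ℂ (steer M f) (steer M g)‖ ≤ 2 / ‖phase (g - f) - 1‖ := by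
  have hgf : ∀ k : ℤ, g - f ≠ k := fun k h => hfg (-k) (by push_cast; linarith)
  rw [inner_steer_steer]
  exact norm_geom_sum_le_of_norm_le_one (norm_phase _).le (phase_ne_one hgf) M

section InnerProduct

variable {𝕜 E ι : Type*} [RCLike 𝕜] [NormedAddCommGroup E] [InnerProductSpace 𝕜 E] [Fintype ι]

lemma inner_sum_smul_sum_smul (α β : ι → 𝕜) (u v : ι → E) :
    inner 𝕜 (∑ p, α p • u p) (∑ q, β q • v q)
      = ∑ p, ∑ q, (starRingEnd 𝕜) (α p) * β q * inner 𝕜 (u p) (v q) := by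
  simp_rw [sum_inner, inner_smul_left, inner_sum, inner_smul_right, mul_sum, mul_assoc]

lemma norm_inner_sum_smul_sum_smul_le (α β : ι → 𝕜) (u v : ι → E) :
    ‖inner 𝕜 (∑ p, α p • u p) (∑ q, β q • v q)‖
      ≤ ∑ p, ∑ q, ‖α p‖ * ‖β q‖ * ‖inner 𝕜 (u p) (v q)‖ := by
  rw [inner_sum_smul_sum_smul]
  refine (norm_sum_le _ _).trans (sum_le_sum fun p _ => (norm_sum_le _ _).trans ?_)
  simp only [norm_mul, RCLike.norm_conj, le_refl]

lemma sum_sub_le_norm_sum_smul_sq [DecidableEq ι] (α : ι → 𝕜) (u : ι → E) :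
    ∑ p, ‖α p‖ ^ 2 * ‖u p‖ ^ 2
        - ∑ p, ∑ q ∈ univ.erase p, ‖α p‖ * ‖α q‖ * ‖inner 𝕜 (u p) (u q)‖
      ≤ ‖∑ p, α p • u p‖ ^ 2 := by
  set T : ι → ι → 𝕜 := fun p q => (starRingEnd 𝕜) (α p) * α q * inner 𝕜 (u p) (u q)
  have hsplit : inner 𝕜 (∑ p, α p • u p) (∑ q, α q • u q)
      = ∑ p, T p p + ∑ p, ∑ q ∈ univ.erase p, T p q := by
    rw [inner_sum_smul_sum_smul, ← sum_add_distrib]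
    exact sum_congr rfl fun p _ => (add_sum_erase _ (T p) (mem_univ p)).symm
  have hdiag : ∀ p, T p p = ((‖α p‖ ^ 2 * ‖u p‖ ^ 2 : ℝ) : 𝕜) := fun p => by
    simp only [T, RCLike.conj_mul, inner_self_eq_norm_sq_to_K]
    push_cast
    ring
  have hoff : ‖∑ p, ∑ q ∈ univ.erase p, T p q‖
      ≤ ∑ p, ∑ q ∈ univ.erase p, ‖α p‖ * ‖α q‖ * ‖inner 𝕜 (u p) (u q)‖ := by
    refine (norm_sum_le _ _).trans (sum_le_sum fun p _ => (norm_sum_le _ _).trans ?_)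
    simp only [T, norm_mul, RCLike.norm_conj, le_refl]
  have hre := RCLike.re_le_norm (-∑ p, ∑ q ∈ univ.erase p, T p q)
  rw [norm_sq_eq_re_inner (𝕜 := 𝕜), hsplit, map_add, sum_congr rfl fun p _ => hdiag p,
    ← RCLike.ofReal_sum, RCLike.ofReal_re]
  rw [map_neg, norm_neg] at hre
  linarith

end InnerProduct

lemma tendsto_div_nhds_zero_of_norm_le {α 𝕜 : Type*} [NormedDivisionRing 𝕜] {l : Filter α}
    {a z : α → 𝕜} {C : ℝ} (ha : ∀ n, ‖a n‖ ≤ C) (hz : Tendsto (‖z ·‖) l atTop) :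
    Tendsto (fun n => a n / z n) l (nhds 0) := by
  refine squeeze_zero_norm (fun n => ?_) ((tendsto_const_nhds (x := C)).div_atTop hz)
  rw [norm_div]
  exact div_le_div_of_nonneg_right (ha n) (norm_nonneg _)

section Channel

variable {P : ℕ}

lemma norm_inner_channel_le (f g : Fin P → ℝ) (hfg : ∀ i j : Fin P, ∀ k : ℤ, f i - g j ≠ k)
    (α β : Fin P → ℂ) (M : ℕ) :
    ‖inner ℂ (∑ p, α p • steer M (f p)) (∑ p, β p • steer M (g p))‖
      ≤ ∑ p, ∑ q, ‖α p‖ * ‖β q‖ * (2 / ‖phase (g q - f p) - 1‖) := by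
  refine (norm_inner_sum_smul_sum_smul_le α β _ _).trans (sum_le_sum fun p _ => ?_)
  exact sum_le_sum fun q _ => by gcongr; exact norm_inner_steer_le (hfg p q) M

lemma tendsto_norm_channel_atTop {f : Fin P → ℝ}
    (hff : ∀ i j : Fin P, i ≠ j → ∀ k : ℤ, f i - f j ≠ k) {α : Fin P → ℂ}
    (hα : ∃ p, α p ≠ 0) :
    Tendsto (fun M : ℕ => ‖∑ p, α p • steer M (f p)‖) atTop atTop := by
  set A := ∑ p, ‖α p‖ ^ 2
  set B := ∑ p, ∑ q ∈ univ.erase p, ‖α p‖ * ‖α q‖ * (2 / ‖phase (f q - f p) - 1‖)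
  have hA : 0 < A := by
    obtain ⟨p, hp⟩ := hα
    exact sum_pos' (fun _ _ => sq_nonneg _) ⟨p, mem_univ p, by positivity⟩
  have hlower : ∀ M : ℕ, A * M - B ≤ ‖∑ p, α p • steer M (f p)‖ ^ 2 := fun M => by
    refine le_trans ?_ (sum_sub_le_norm_sum_smul_sq α fun p => steer M (f p))
    simp only [norm_steer_sq, ← sum_mul]
    refine sub_le_sub_left (sum_le_sum fun p _ => sum_le_sum fun q hq => ?_) _
    gcongr
    exact norm_inner_steer_le (hff p q (ne_of_mem_erase hq).symm) M
  have hlin : Tendsto (fun M : ℕ => A * M - B) atTop atTop :=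
    tendsto_atTop_add_const_right _ _ (tendsto_natCast_atTop_atTop.const_mul_atTop hA)
  refine tendsto_atTop_mono (fun M => ?_) (Real.tendsto_sqrt_atTop.comp hlin)
  exact (Real.sqrt_le_sqrt (hlower M)).trans_eq (Real.sqrt_sq (norm_nonneg _))

end Channel

theorem stmt6_general (P : ℕ) (f g : Fin P → ℝ)
    (hff : ∀ i j : Fin P, i ≠ j → ∀ k : ℤ, f i - f j ≠ (k : ℝ))
    (hgg : ∀ i j : Fin P, i ≠ j → ∀ k : ℤ, g i - g j ≠ (k : ℝ))
    (hfg : ∀ i j : Fin P, ∀ k : ℤ, f i - g j ≠ (k : ℝ))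
    (α β : Fin P → ℂ) (hα : ∃ p, α p ≠ 0) (hβ : ∃ p, β p ≠ 0) :
    Filter.Tendsto
      (fun M : ℕ =>
        (inner ℂ (∑ p, α p • steer M (f p)) (∑ p, β p • steer M (g p)) : ℂ) /
          (((‖∑ p, α p • steer M (f p)‖ : ℝ) : ℂ) * ((‖∑ p, β p • steer M (g p)‖ : ℝ) : ℂ)))
      Filter.atTop (nhds 0) := by
  refine tendsto_div_nhds_zero_of_norm_le (norm_inner_channel_le f g hfg α β) ?_
  simp only [norm_mul, Complex.norm_real, norm_norm]
  exact (tendsto_norm_channel_atTop hff hα).atTop_mul_atTop₀ (tendsto_norm_channel_atTop hgg hβ)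

/-- Lemma 1: asymptotic orthogonality of user channels with distinct AOAs:
with `f_i − f_j ∉ ℤ`, `g_i − g_j ∉ ℤ` for `i ≠ j`, `f_i − g_j ∉ ℤ` for all `i, j`, and
gain vectors `α, β` not identically zero, the correlation
`γ_M = ⟨h_M, h'_M⟩ / (‖h_M‖·‖h'_M‖)` of the channels `h_M = Σ_p α_p a_M(f_p)` and
`h'_M = Σ_p β_p a_M(g_p)` tends to `0` as `M → ∞`. -/
theorem stmt6 (P : ℕ) (hP : 1 ≤ P) (f g : Fin P → ℝ)
    (hff : ∀ i j : Fin P, i ≠ j → ∀ k : ℤ, f i - f j ≠ (k : ℝ))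
    (hgg : ∀ i j : Fin P, i ≠ j → ∀ k : ℤ, g i - g j ≠ (k : ℝ))
    (hfg : ∀ i j : Fin P, ∀ k : ℤ, f i - g j ≠ (k : ℝ))
    (α β : Fin P → ℂ) (hα : ∃ p, α p ≠ 0) (hβ : ∃ p, β p ≠ 0) :
    Filter.Tendsto
      (fun M : ℕ =>
        (inner ℂ (∑ p, α p • steer M (f p)) (∑ p, β p • steer M (g p)) : ℂ) /
          (((‖∑ p, α p • steer M (f p)‖ : ℝ) : ℂ) * ((‖∑ p, β p • steer M (g p)‖ : ℝ) : ℂ)))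
      Filter.atTop (nhds 0) :=
  stmt6_general P f g hff hgg hfg α β hα hβ
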